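/- arXiv:1912.00472 — 6 statements merged into one kernel-verified Lean document; each statement's English description precedes it below -/
import Mathlib

section
/- Let R be a ring, let N and M be ℤ-indexed chain complexes of R-modules, let (f, g, φ) be a contraction from N to M, and let δ be a perturbation of N that is pointwise nilpotent with respect to φ. Define, for each x, Σx = Σ_{i≥0} (−1)^i (φδ)^i x (a finite sum by pointwise nilpotence), and set ∂_δ = f ∘ δ ∘ Σ ∘ g, f_δ = f ∘ (id − δ ∘ Σ ∘ φ), g_δ = Σ ∘ g, φ_δ = Σ ∘ φ. Then ∂_M + ∂_δ is a differential on the underlying graded module of M, ∂_N + δ is a differential on the underlying graded module of N, and (f_δ, g_δ, φ_δ) is a contraction from the chain complex (N, ∂_N + δ) to the chain complex (M, ∂_M + ∂_δ). -/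
/-! Because `φδ` is pointwise nilpotent, `S` is a two-sided inverse of `1 + φδ` given by a
pointwise finite Neumann series, and it preserves degrees since `φδ` does. Everything else is
algebra in the ring `End N`: from `S (1 + φδ) = 1 = (1 + φδ) S`, the homotopy identity
`gf + φ dN + dN φ = 1` and the perturbation identity `dN δ + δ dN + δδ = 0` one derives the
perturbed homotopy identity and identities such as `(dN + δ) S = S dN + S gf δ S`, which,
composed with `f` and `g`, are the chain map conditions and `(dM + ∂_δ)² = 0`. The side
conditions come from `φ S = φ` and `f_δ S = f_δ`, both instances of `y S = y` whenever `y φ = 0`. -/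

/-- A contraction between ℤ-graded chain complexes of `R`-modules, presented via total
modules `N` and `M` with internal ℤ-gradings `𝒩`, `ℳ`, differentials `dN`, `dM` of
degree `-1` squaring to zero, chain maps `f : N → M`, `g : M → N` of degree `0`, and a
homotopy operator `φ : N → N` of degree `+1`, satisfying
`f ∘ g = id`, `g ∘ f + φ ∘ dN + dN ∘ φ = id`, `f ∘ φ = 0`, `φ ∘ g = 0`, `φ ∘ φ = 0`. -/
structure Contraction (R : Type) [Ring R]
    (N : Type) [AddCommGroup N] [Module R N]
    (M : Type) [AddCommGroup M] [Module R M]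
    (𝒩 : ℤ → Submodule R N) (ℳ : ℤ → Submodule R M)
    (dN : N →ₗ[R] N) (dM : M →ₗ[R] M)
    (f : N →ₗ[R] M) (g : M →ₗ[R] N) (φ : N →ₗ[R] N) : Prop where
  gradedN : DirectSum.IsInternal 𝒩
  gradedM : DirectSum.IsInternal ℳ
  dN_deg : ∀ i : ℤ, ∀ x ∈ 𝒩 i, dN x ∈ 𝒩 (i - 1)
  dM_deg : ∀ i : ℤ, ∀ x ∈ ℳ i, dM x ∈ ℳ (i - 1)
  dN_sq : dN ∘ₗ dN = 0
  dM_sq : dM ∘ₗ dM = 0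
  f_deg : ∀ i : ℤ, ∀ x ∈ 𝒩 i, f x ∈ ℳ i
  g_deg : ∀ i : ℤ, ∀ x ∈ ℳ i, g x ∈ 𝒩 i
  φ_deg : ∀ i : ℤ, ∀ x ∈ 𝒩 i, φ x ∈ 𝒩 (i + 1)
  f_chain : dM ∘ₗ f = f ∘ₗ dN
  g_chain : dN ∘ₗ g = g ∘ₗ dM
  fg : f ∘ₗ g = LinearMap.id
  homotopy : g ∘ₗ f + φ ∘ₗ dN + dN ∘ₗ φ = LinearMap.id
  fφ : f ∘ₗ φ = 0
  φg : φ ∘ₗ g = 0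
  φφ : φ ∘ₗ φ = 0

open Finset

def IsNeumannSeries {R N : Type*} [Ring R] [AddCommGroup N] [Module R N]
    (a S : Module.End R N) : Prop :=
  ∀ (x : N) (m : ℕ), (a ^ m) x = 0 → S x = ∑ i ∈ range m, ((-1 : ℤ) ^ i) • ((a ^ i) x)

theorem Module.End.neg_pow_apply_eq_zero {R N : Type*} [Ring R] [AddCommGroup N] [Module R N]
    {a : Module.End R N} {x : N} {m : ℕ} (hm : (a ^ m) x = 0) : ((-a) ^ m) x = 0 := by
  rw [neg_pow, Module.End.mul_apply, hm, map_zero]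

namespace IsNeumannSeries

variable {R N : Type*} [Ring R] [AddCommGroup N] [Module R N] {a S : Module.End R N}

theorem apply_eq_geom_sum (hS : IsNeumannSeries a S) {x : N} {m : ℕ} (hm : (a ^ m) x = 0) :
    S x = (∑ i ∈ range m, (-a) ^ i) x := by
  rw [hS x m hm, LinearMap.sum_apply]
  refine sum_congr rfl fun i _ => ?_
  rw [show (-a) ^ i = ((-1 : ℤ) ^ i) • a ^ i by rw [neg_pow, zsmul_eq_mul]; norm_num,
    LinearMap.smul_apply]

theorem one_add_mul (hS : IsNeumannSeries a S) (hnil : ∀ x, ∃ m : ℕ, (a ^ m) x = 0) :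
    (1 + a) * S = 1 := by
  ext x
  obtain ⟨m, hm⟩ := hnil x
  have := congrArg (· x) (mul_neg_geom_sum (-a) m)
  simp only [sub_neg_eq_add, LinearMap.sub_apply, Module.End.neg_pow_apply_eq_zero hm, sub_zero,
    Module.End.mul_apply] at this
  rw [Module.End.mul_apply, hS.apply_eq_geom_sum hm, this]

theorem mul_one_add (hS : IsNeumannSeries a S) (hnil : ∀ x, ∃ m : ℕ, (a ^ m) x = 0) :
    S * (1 + a) = 1 := by
  ext x
  obtain ⟨m, hm⟩ := hnil x
  have hm' : (a ^ m) ((1 + a) x) = 0 := by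
    have hcomm : Commute (a ^ m) (1 + a) := ((Commute.one_right a).add_right (.refl a)).pow_left m
    rw [← Module.End.mul_apply, hcomm.eq, Module.End.mul_apply, hm, map_zero]
  have := congrArg (· x) (geom_sum_mul_neg (-a) m)
  simp only [sub_neg_eq_add, LinearMap.sub_apply, Module.End.neg_pow_apply_eq_zero hm, sub_zero,
    Module.End.mul_apply] at this
  rw [Module.End.mul_apply, hS.apply_eq_geom_sum hm', this]

theorem apply_mem (hS : IsNeumannSeries a S) (hnil : ∀ x, ∃ m : ℕ, (a ^ m) x = 0)
    {p : Submodule R N} (ha : ∀ x ∈ p, a x ∈ p) {x : N} (hx : x ∈ p) : S x ∈ p := by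
  obtain ⟨m, hm⟩ := hnil x
  rw [hS x m hm]
  exact p.sum_mem fun i _ =>
    p.smul_of_tower_mem _ (Module.End.pow_apply_mem_of_forall_mem i ha x hx)

end IsNeumannSeries

namespace Perturbation

variable {A : Type*} [Ring A] {d δ φ p S : A}

-- Multiplied on the left by `1 + φδ`, both sides become `(d + δ - φdδ) S`.
theorem inclusion_chain (hS₁ : S * (1 + φ * δ) = 1) (hS₂ : (1 + φ * δ) * S = 1)
    (hp : p + φ * d + d * φ = 1) (hδ : d * δ + δ * d + δ * δ = 0) :
    S * d + S * p * (δ * S) = (d + δ) * S := by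
  linear_combination (norm := noncomm_ring) (-(S*φ))*hδ*S + hS₁*(d*S)
      + hS₁*(δ*S) - (S*d)*hS₂ + S*hp*(δ*S)

theorem projection_chain (hS₁ : S * (1 + φ * δ) = 1) (hS₂ : (1 + φ * δ) * S = 1)
    (hp : p + φ * d + d * φ = 1) (hδ : d * δ + δ * d + δ * δ = 0) :
    d * (1 - δ * S * φ) + δ * S * p * (1 - δ * S * φ) = (1 - δ * S * φ) * (d + δ) := by
  linear_combination (norm := noncomm_ring) δ*hS₁ + (δ*S)*hp*(1 - δ*S*φ)
      + (δ*S*d)*hS₂*φ - (1 - δ*S*φ)*hδ*(S*φ) - δ*hS₁*(d*S*φ) - δ*hS₁*(δ*S*φ)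

theorem homotopy (hS₁ : S * (1 + φ * δ) = 1) (hS₂ : (1 + φ * δ) * S = 1)
    (hp : p + φ * d + d * φ = 1) (hδ : d * δ + δ * d + δ * δ = 0) :
    S * p * (1 - δ * S * φ) + S * φ * (d + δ) + (d + δ) * (S * φ) = 1 := by
  linear_combination (norm := noncomm_ring) hS₁ + (S*φ)*hδ*(S*φ) - hS₁*(d*S*φ)
      - hS₁*(δ*S*φ) + (S*d)*hS₂*φ + S*hp*(1 - δ*S*φ)

theorem differential_sq (hS₁ : S * (1 + φ * δ) = 1) (hS₂ : (1 + φ * δ) * S = 1)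
    (hp : p + φ * d + d * φ = 1) (hδ : d * δ + δ * d + δ * δ = 0) :
    d * (δ * S) + δ * S * d + δ * S * p * (δ * S) = 0 := by
  linear_combination (norm := noncomm_ring) (δ*S)*hp*(δ*S) - (δ*S*d)*hS₂
      - (δ*S*φ)*hδ*S + δ*hS₁*(d*S) + δ*hS₁*(δ*S) + hδ*S

end Perturbation

theorem LinearMap.comp_eq_self_of_comp_eq_zero {R N P : Type*} [Ring R] [AddCommGroup N]
    [Module R N] [AddCommGroup P] [Module R P] {φ δ S : Module.End R N} {y : N →ₗ[R] P}
    (hy : y ∘ₗ φ = 0) (hS : (1 + φ * δ) * S = 1) : y ∘ₗ S = y := by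
  calc y ∘ₗ S = y ∘ₗ ((1 + φ * δ) * S) - (y ∘ₗ φ) ∘ₗ δ ∘ₗ S := by
        simp only [add_mul, one_mul, Module.End.mul_eq_comp, LinearMap.comp_add,
          LinearMap.comp_assoc, add_sub_cancel_right]
    _ = y := by rw [hS, hy, LinearMap.zero_comp, sub_zero]; rfl

namespace Contraction

variable {R N M : Type} [Ring R] [AddCommGroup N] [Module R N] [AddCommGroup M] [Module R M]
    {𝒩 : ℤ → Submodule R N} {ℳ : ℤ → Submodule R M} {dN : N →ₗ[R] N} {dM : M →ₗ[R] M}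
    {f : N →ₗ[R] M} {g : M →ₗ[R] N} {φ : N →ₗ[R] N}

theorem f_chain_assoc (hc : Contraction R N M 𝒩 ℳ dN dM f g φ) {P : Type*} [AddCommGroup P]
    [Module R P] (X : P →ₗ[R] N) :
    dM ∘ₗ f ∘ₗ X = f ∘ₗ dN ∘ₗ X := by
  rw [← LinearMap.comp_assoc, hc.f_chain, LinearMap.comp_assoc]

theorem perturb (hc : Contraction R N M 𝒩 ℳ dN dM f g φ) {δ S : N →ₗ[R] N}
    (δ_deg : ∀ i : ℤ, ∀ x ∈ 𝒩 i, δ x ∈ 𝒩 (i - 1))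
    (δ_pert : (dN + δ) ∘ₗ (dN + δ) = 0)
    (S_deg : ∀ i : ℤ, ∀ x ∈ 𝒩 i, S x ∈ 𝒩 i)
    (hS₁ : S * (1 + φ * δ) = 1) (hS₂ : (1 + φ * δ) * S = 1) :
    Contraction R N M 𝒩 ℳ (dN + δ) (dM + f ∘ₗ δ ∘ₗ S ∘ₗ g)
      (f ∘ₗ (LinearMap.id - δ ∘ₗ S ∘ₗ φ)) (S ∘ₗ g) (S ∘ₗ φ) := by
  have hδ : dN * δ + δ * dN + δ * δ = 0 := by
    have h₁ : (dN + δ) * (dN + δ) = 0 := δ_pert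
    have h₂ : dN * dN = 0 := hc.dN_sq
    linear_combination (norm := noncomm_ring) h₁ - h₂
  have hf'φ : (f ∘ₗ (LinearMap.id - δ ∘ₗ S ∘ₗ φ)) ∘ₗ φ = 0 := by
    simp only [LinearMap.comp_assoc, LinearMap.sub_comp, LinearMap.id_comp, hc.φφ,
      LinearMap.comp_zero, sub_zero, hc.fφ]
  have hf'S := LinearMap.comp_eq_self_of_comp_eq_zero hf'φ hS₂
  have hφS := LinearMap.comp_eq_self_of_comp_eq_zero hc.φφ hS₂
  have hp := hc.homotopy
  exact {
  gradedN := hc.gradedN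
  gradedM := hc.gradedM
  dN_deg := fun i x hx => add_mem (hc.dN_deg i x hx) (δ_deg i x hx)
  dM_deg := fun i x hx =>
    add_mem (hc.dM_deg i x hx) (hc.f_deg _ _ (δ_deg _ _ (S_deg _ _ (hc.g_deg _ _ hx))))
  dN_sq := δ_pert
  dM_sq := by
    have h := congrArg (f ∘ₗ · ∘ₗ g) (Perturbation.differential_sq hS₁ hS₂ hp hδ)
    simp only [Module.End.mul_eq_comp, LinearMap.add_comp, LinearMap.comp_add,
      LinearMap.comp_assoc, LinearMap.zero_comp, LinearMap.comp_zero] at h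
    simp only [LinearMap.add_comp, LinearMap.comp_add, LinearMap.comp_assoc, hc.f_chain_assoc,
      ← hc.g_chain, hc.dM_sq, zero_add]
    rw [← h]; abel
  f_deg := fun i x hx => hc.f_deg i _ <| sub_mem hx <| by
    simpa using δ_deg _ _ (S_deg _ _ (hc.φ_deg i x hx))
  g_deg := fun i x hx => S_deg _ _ (hc.g_deg _ _ hx)
  φ_deg := fun i x hx => S_deg _ _ (hc.φ_deg _ _ hx)
  f_chain := by
    have h := congrArg (f ∘ₗ ·) (Perturbation.projection_chain hS₁ hS₂ hp hδ)
    simp only [Module.End.mul_eq_comp, Module.End.one_eq_id, LinearMap.comp_add,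
      LinearMap.comp_assoc] at h
    simp only [LinearMap.add_comp, LinearMap.comp_add, LinearMap.comp_assoc, hc.f_chain_assoc]
    exact h
  g_chain := by
    have h := congrArg (· ∘ₗ g) (Perturbation.inclusion_chain hS₁ hS₂ hp hδ)
    simp only [Module.End.mul_eq_comp, LinearMap.add_comp, LinearMap.comp_assoc] at h
    simp only [LinearMap.add_comp, LinearMap.comp_add, LinearMap.comp_assoc, ← hc.g_chain]
    exact h.symm
  fg := by
    rw [← LinearMap.comp_assoc, hf'S]
    simp only [LinearMap.comp_assoc, LinearMap.sub_comp, LinearMap.id_comp, hc.φg,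
      LinearMap.comp_zero, sub_zero, hc.fg]
  homotopy := Perturbation.homotopy hS₁ hS₂ hp hδ
  fφ := by rw [← LinearMap.comp_assoc, hf'S, hf'φ]
  φg := by
    rw [LinearMap.comp_assoc, ← LinearMap.comp_assoc g S φ, hφS, hc.φg, LinearMap.comp_zero]
  φφ := by
    rw [LinearMap.comp_assoc, ← LinearMap.comp_assoc φ S φ, hφS, hc.φφ, LinearMap.comp_zero] }

end Contraction

/-- **Basic Perturbation Lemma.** Given a contraction `(f, g, φ)` from `N` to `M` and a
perturbation `δ` of `N` that is pointwise nilpotent with respect to `φ`, with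
`S x = ∑_{i ≥ 0} (-1)^i (φδ)^i x`, the perturbed data
`∂_δ = f ∘ δ ∘ S ∘ g`, `f_δ = f ∘ (id - δ ∘ S ∘ φ)`, `g_δ = S ∘ g`, `φ_δ = S ∘ φ`
yields: `dM + ∂_δ` is a differential on the underlying graded module of `M`,
`dN + δ` is a differential on the underlying graded module of `N`, and
`(f_δ, g_δ, φ_δ)` is a contraction from `(N, dN + δ)` to `(M, dM + ∂_δ)`. -/
theorem basic_perturbation_lemma
    (R : Type) [Ring R]
    (N : Type) [AddCommGroup N] [Module R N]
    (M : Type) [AddCommGroup M] [Module R M]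
    (𝒩 : ℤ → Submodule R N) (ℳ : ℤ → Submodule R M)
    (dN : N →ₗ[R] N) (dM : M →ₗ[R] M)
    (f : N →ₗ[R] M) (g : M →ₗ[R] N) (φ : N →ₗ[R] N)
    (hc : Contraction R N M 𝒩 ℳ dN dM f g φ)
    -- `δ` is a perturbation of `N` ...
    (δ : N →ₗ[R] N)
    (δ_deg : ∀ i : ℤ, ∀ x ∈ 𝒩 i, δ x ∈ 𝒩 (i - 1))
    (δ_pert : (dN + δ) ∘ₗ (dN + δ) = 0)
    -- ... pointwise nilpotent with respect to `φ`:
    (δ_nil : ∀ x : N, ∃ m : ℕ, ((φ ∘ₗ δ) ^ m) x = 0)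
    -- `S x = ∑_{i ≥ 0} (-1)^i (φ ∘ δ)^i x`, a finite sum by pointwise nilpotence:
    (S : N →ₗ[R] N)
    (hS : ∀ (x : N) (m : ℕ), ((φ ∘ₗ δ) ^ m) x = 0 →
      S x = ∑ i ∈ Finset.range m, ((-1 : ℤ) ^ i) • (((φ ∘ₗ δ) ^ i) x)) :
    -- `dM + ∂_δ` is a differential on the underlying graded module of `M`:
    (∀ i : ℤ, ∀ x ∈ ℳ i, (dM + f ∘ₗ δ ∘ₗ S ∘ₗ g) x ∈ ℳ (i - 1)) ∧
    ((dM + f ∘ₗ δ ∘ₗ S ∘ₗ g) ∘ₗ (dM + f ∘ₗ δ ∘ₗ S ∘ₗ g) = 0) ∧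
    -- `dN + δ` is a differential on the underlying graded module of `N`:
    (∀ i : ℤ, ∀ x ∈ 𝒩 i, (dN + δ) x ∈ 𝒩 (i - 1)) ∧
    ((dN + δ) ∘ₗ (dN + δ) = 0) ∧
    -- `(f_δ, g_δ, φ_δ)` is a contraction from `(N, dN + δ)` to `(M, dM + ∂_δ)`:
    Contraction R N M 𝒩 ℳ (dN + δ) (dM + f ∘ₗ δ ∘ₗ S ∘ₗ g)
      (f ∘ₗ (LinearMap.id - δ ∘ₗ S ∘ₗ φ)) (S ∘ₗ g) (S ∘ₗ φ) := by
  have hS' : IsNeumannSeries (φ ∘ₗ δ) S := hS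
  have S_deg : ∀ i : ℤ, ∀ x ∈ 𝒩 i, S x ∈ 𝒩 i := fun i _ hx =>
    hS'.apply_mem δ_nil (fun y hy => by simpa using hc.φ_deg _ _ (δ_deg i y hy)) hx
  have hc' :=
    hc.perturb δ_deg δ_pert S_deg (hS'.mul_one_add δ_nil) (hS'.one_add_mul δ_nil)
  exact ⟨hc'.dM_deg, hc'.dM_sq, hc'.dN_deg, hc'.dN_sq, hc'⟩
end

section
/- Let R be a ring, let N and M be ℤ-indexed chain complexes of R-modules, let (f, g, φ) be a contraction from N to M, and let δ be a perturbation of N that is pointwise nilpotent with respect to φ. Define Σx = Σ_{i≥0} (−1)^i (φδ)^i x and ∂_δ = f ∘ δ ∘ Σ ∘ g. Then (∂_M + ∂_δ) ∘ (∂_M + ∂_δ) = 0, i.e. the perturbed operator ∂_M + ∂_δ is a differential on the underlying graded module of M. -/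
theorem perturbation_transfer_identity {E : Type*} [Ring E] {d δ φ S : E} (hd : d * d = 0)
    (hδ : (d + δ) * (d + δ) = 0) (hSl : S * (1 + φ * δ) = 1) (hSr : (1 + φ * δ) * S = 1) :
    d * (δ * S) + δ * S * d + δ * S * (1 - d * φ - φ * d) * (δ * S) = 0 := by
  -- The left side is a two-sided combination of the hypotheses.
  have certificate : d * (δ * S) + δ * S * d + δ * S * (1 - d * φ - φ * d) * (δ * S) =
      (1 - δ * S * φ) * ((d + δ) * (d + δ) - d * d) * S + δ * (S * (1 + φ * δ) - 1) * (δ + d) * S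
        - δ * S * d * ((1 + φ * δ) * S - 1) := by noncomm_ring
  rw [certificate, hd, hδ, hSl, hSr]
  noncomm_ring

namespace Module.End

variable {R N : Type*} [Ring R] [AddCommGroup N] [Module R N]

theorem neg_pow_apply (T : Module.End R N) (i : ℕ) (x : N) :
    ((-T) ^ i) x = (-1 : ℤ) ^ i • (T ^ i) x := by
  induction i generalizing x with
  | zero => simp
  | succ i ih =>
    rw [pow_succ, mul_apply, ih, pow_succ, pow_succ, mul_smul]
    simp [← mul_apply, ← pow_succ]

section AlternatingSeries

variable {T S : Module.End R N}
  (hS : ∀ (x : N) (m : ℕ), (T ^ m) x = 0 → S x = ∑ i ∈ Finset.range m, (-1 : ℤ) ^ i • (T ^ i) x)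
include hS

theorem apply_eq_geom_sum_neg_apply {x : N} {m : ℕ} (hm : (T ^ m) x = 0) :
    S x = (∑ i ∈ Finset.range m, (-T) ^ i) x := by
  simp only [hS x m hm, LinearMap.sum_apply, neg_pow_apply]

theorem one_add_mul_eq_one (hT : ∀ x : N, ∃ m : ℕ, (T ^ m) x = 0) : (1 + T) * S = 1 := by
  ext x
  obtain ⟨m, hm⟩ := hT x
  rw [mul_apply, apply_eq_geom_sum_neg_apply hS hm, ← mul_apply, ← sub_neg_eq_add,
    mul_neg_geom_sum, LinearMap.sub_apply, neg_pow_apply, hm, smul_zero, sub_zero]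

theorem mul_one_add_eq_one (hT : ∀ x : N, ∃ m : ℕ, (T ^ m) x = 0) : S * (1 + T) = 1 := by
  ext x
  obtain ⟨m, hm⟩ := hT x
  have hm' : (T ^ m) ((1 + T) x) = 0 := by
    rw [LinearMap.add_apply, map_add, one_apply, ← mul_apply, ← pow_succ, pow_succ', mul_apply, hm,
      map_zero, add_zero]
  rw [mul_apply, apply_eq_geom_sum_neg_apply hS hm', ← mul_apply, ← sub_neg_eq_add,
    geom_sum_mul_neg, LinearMap.sub_apply, neg_pow_apply, hm, smul_zero, sub_zero]

end AlternatingSeries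

end Module.End

section Transfer

variable {R N M : Type*} [Ring R] [AddCommGroup N] [Module R N] [AddCommGroup M] [Module R M]

theorem LinearMap.mul_self_add_comp_comp {dN A : Module.End R N} {dM : Module.End R M}
    {f : N →ₗ[R] M} {g : M →ₗ[R] N} (hf : dM ∘ₗ f = f ∘ₗ dN) (hg : dN ∘ₗ g = g ∘ₗ dM) :
    (dM + f ∘ₗ A ∘ₗ g) * (dM + f ∘ₗ A ∘ₗ g) =
      dM * dM + f ∘ₗ (dN * A + A * dN + A * (g ∘ₗ f) * A) ∘ₗ g := by
  ext y
  have hf' := LinearMap.congr_fun hf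
  have hg' := LinearMap.congr_fun hg
  simp only [LinearMap.comp_apply] at hf' hg'
  simp only [Module.End.mul_apply, LinearMap.add_apply, LinearMap.comp_apply, map_add, hf',
    ← hg']
  abel

end Transfer

theorem perturbed_differential_squares_to_zero_general
    (R : Type) [Ring R]
    (N : Type) [AddCommGroup N] [Module R N]
    (M : Type) [AddCommGroup M] [Module R M]
    (𝒩 : ℤ → Submodule R N) (ℳ : ℤ → Submodule R M)
    (dN : N →ₗ[R] N) (dM : M →ₗ[R] M)
    (f : N →ₗ[R] M) (g : M →ₗ[R] N) (φ : N →ₗ[R] N)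
    (hc : Contraction R N M 𝒩 ℳ dN dM f g φ)
    (δ : N →ₗ[R] N)
    (δ_pert : (dN + δ) ∘ₗ (dN + δ) = 0)
    (δ_nil : ∀ x : N, ∃ m : ℕ, ((φ ∘ₗ δ) ^ m) x = 0)
    (S : N →ₗ[R] N)
    (hS : ∀ (x : N) (m : ℕ), ((φ ∘ₗ δ) ^ m) x = 0 →
      S x = ∑ i ∈ Finset.range m, ((-1 : ℤ) ^ i) • (((φ ∘ₗ δ) ^ i) x)) :
    (dM + f ∘ₗ δ ∘ₗ S ∘ₗ g) ∘ₗ (dM + f ∘ₗ δ ∘ₗ S ∘ₗ g) = 0 := by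
  have hgf : g ∘ₗ f = 1 - dN * φ - φ * dN := eq_sub_of_add_eq (eq_sub_of_add_eq hc.homotopy)
  have hM : dM * dM = 0 := hc.dM_sq
  calc (dM + f ∘ₗ δ ∘ₗ S ∘ₗ g) ∘ₗ (dM + f ∘ₗ δ ∘ₗ S ∘ₗ g)
      = (dM + f ∘ₗ (δ * S) ∘ₗ g) * (dM + f ∘ₗ (δ * S) ∘ₗ g) := rfl
    _ = dM * dM + f ∘ₗ (dN * (δ * S) + δ * S * dN + δ * S * (g ∘ₗ f) * (δ * S)) ∘ₗ g :=
      LinearMap.mul_self_add_comp_comp hc.f_chain hc.g_chain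
    _ = 0 := by
      rw [hM, hgf, perturbation_transfer_identity hc.dN_sq δ_pert
        (Module.End.mul_one_add_eq_one hS δ_nil) (Module.End.one_add_mul_eq_one hS δ_nil)]
      simp

/-- The perturbed operator `dM + f ∘ δ ∘ S ∘ g` on `M` squares to zero. -/
theorem perturbed_differential_squares_to_zero
    (R : Type) [Ring R]
    (N : Type) [AddCommGroup N] [Module R N]
    (M : Type) [AddCommGroup M] [Module R M]
    (𝒩 : ℤ → Submodule R N) (ℳ : ℤ → Submodule R M)
    (dN : N →ₗ[R] N) (dM : M →ₗ[R] M)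
    (f : N →ₗ[R] M) (g : M →ₗ[R] N) (φ : N →ₗ[R] N)
    (hc : Contraction R N M 𝒩 ℳ dN dM f g φ)
    (δ : N →ₗ[R] N)
    (δ_deg : ∀ i : ℤ, ∀ x ∈ 𝒩 i, δ x ∈ 𝒩 (i - 1))
    (δ_pert : (dN + δ) ∘ₗ (dN + δ) = 0)
    (δ_nil : ∀ x : N, ∃ m : ℕ, ((φ ∘ₗ δ) ^ m) x = 0)
    (S : N →ₗ[R] N)
    (hS : ∀ (x : N) (m : ℕ), ((φ ∘ₗ δ) ^ m) x = 0 →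
      S x = ∑ i ∈ Finset.range m, ((-1 : ℤ) ^ i) • (((φ ∘ₗ δ) ^ i) x)) :
    (dM + f ∘ₗ δ ∘ₗ S ∘ₗ g) ∘ₗ (dM + f ∘ₗ δ ∘ₗ S ∘ₗ g) = 0 :=
  perturbed_differential_squares_to_zero_general R N M 𝒩 ℳ dN dM f g φ hc δ δ_pert δ_nil S hS
end

section
/- Let R be a ring, let N and M be ℤ-indexed chain complexes of R-modules, let (f, g, φ) be a contraction from N to M, and let δ be a perturbation of N that is pointwise nilpotent with respect to φ. Define Σx = Σ_{i≥0} (−1)^i (φδ)^i x, f_δ = f ∘ (id − δ ∘ Σ ∘ φ), and g_δ = Σ ∘ g. Then f_δ ∘ g_δ = id_M. -/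
/-!
Every term of `S = ∑ (-1)^i (φδ)^i` except the zeroth lies in the image of `φ`, which both `f`
and `φ` annihilate. Hence `f ∘ S = f` and `φ ∘ S = φ`, so `φ ∘ g_δ = φ ∘ g = 0` makes the
correction term of `f_δ` vanish on the image of `g_δ`, and `f_δ ∘ g_δ = f ∘ g = id`.
-/

section

variable {R N P : Type} [Ring R] [AddCommGroup N] [Module R N] [AddCommGroup P] [Module R P]
  {φ δ : N →ₗ[R] N} {A : N →ₗ[R] P}

theorem apply_pow_succ_eq_zero_of_comp_eq_zero (hA : A ∘ₗ φ = 0) (k : ℕ) (y : N) :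
    A (((φ ∘ₗ δ) ^ (k + 1)) y) = 0 := by
  rw [pow_succ', Module.End.mul_apply, LinearMap.comp_apply]
  exact LinearMap.congr_fun hA _

theorem apply_alternating_sum_eq_of_comp_eq_zero (hA : A ∘ₗ φ = 0) (m : ℕ) (y : N) :
    A (∑ i ∈ Finset.range (m + 1), ((-1 : ℤ) ^ i) • (((φ ∘ₗ δ) ^ i) y)) = A y := by
  rw [map_sum, Finset.sum_range_succ']
  simp only [map_zsmul, apply_pow_succ_eq_zero_of_comp_eq_zero hA, smul_zero,
    Finset.sum_const_zero, pow_zero, one_smul, zero_add, Module.End.one_apply]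

theorem apply_eq_of_comp_eq_zero_of_eq_alternating_sum (hA : A ∘ₗ φ = 0) {S : N →ₗ[R] N}
    (hS : ∀ (x : N) (m : ℕ), ((φ ∘ₗ δ) ^ m) x = 0 →
      S x = ∑ i ∈ Finset.range m, ((-1 : ℤ) ^ i) • (((φ ∘ₗ δ) ^ i) x))
    {y : N} (hy : ∃ m : ℕ, ((φ ∘ₗ δ) ^ m) y = 0) : A (S y) = A y := by
  obtain ⟨m, hm⟩ := hy
  have hm' : ((φ ∘ₗ δ) ^ (m + 1)) y = 0 := by
    rw [pow_succ', Module.End.mul_apply, hm, map_zero]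
  rw [hS y (m + 1) hm', apply_alternating_sum_eq_of_comp_eq_zero hA]

end

theorem perturbed_fg_eq_id_general
    (R : Type) [Ring R]
    (N : Type) [AddCommGroup N] [Module R N]
    (M : Type) [AddCommGroup M] [Module R M]
    (𝒩 : ℤ → Submodule R N) (ℳ : ℤ → Submodule R M)
    (dN : N →ₗ[R] N) (dM : M →ₗ[R] M)
    (f : N →ₗ[R] M) (g : M →ₗ[R] N) (φ : N →ₗ[R] N)
    (hc : Contraction R N M 𝒩 ℳ dN dM f g φ)
    (δ : N →ₗ[R] N)
    (δ_nil : ∀ x : N, ∃ m : ℕ, ((φ ∘ₗ δ) ^ m) x = 0)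
    (S : N →ₗ[R] N)
    (hS : ∀ (x : N) (m : ℕ), ((φ ∘ₗ δ) ^ m) x = 0 →
      S x = ∑ i ∈ Finset.range m, ((-1 : ℤ) ^ i) • (((φ ∘ₗ δ) ^ i) x)) :
    (f ∘ₗ (LinearMap.id - δ ∘ₗ S ∘ₗ φ)) ∘ₗ (S ∘ₗ g) = LinearMap.id := by
  ext x
  have hφS : φ (S (g x)) = 0 :=
    (apply_eq_of_comp_eq_zero_of_eq_alternating_sum hc.φφ hS (δ_nil (g x))).trans
      (LinearMap.congr_fun hc.φg x)
  have hfS : f (S (g x)) = x :=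
    (apply_eq_of_comp_eq_zero_of_eq_alternating_sum hc.fφ hS (δ_nil (g x))).trans
      (LinearMap.congr_fun hc.fg x)
  simp [hφS, hfS]

/-- The perturbed maps satisfy `f_δ ∘ g_δ = id_M`, where `f_δ = f ∘ (id - δ ∘ S ∘ φ)`
and `g_δ = S ∘ g`. -/
theorem perturbed_fg_eq_id
    (R : Type) [Ring R]
    (N : Type) [AddCommGroup N] [Module R N]
    (M : Type) [AddCommGroup M] [Module R M]
    (𝒩 : ℤ → Submodule R N) (ℳ : ℤ → Submodule R M)
    (dN : N →ₗ[R] N) (dM : M →ₗ[R] M)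
    (f : N →ₗ[R] M) (g : M →ₗ[R] N) (φ : N →ₗ[R] N)
    (hc : Contraction R N M 𝒩 ℳ dN dM f g φ)
    (δ : N →ₗ[R] N)
    (δ_deg : ∀ i : ℤ, ∀ x ∈ 𝒩 i, δ x ∈ 𝒩 (i - 1))
    (δ_pert : (dN + δ) ∘ₗ (dN + δ) = 0)
    (δ_nil : ∀ x : N, ∃ m : ℕ, ((φ ∘ₗ δ) ^ m) x = 0)
    (S : N →ₗ[R] N)
    (hS : ∀ (x : N) (m : ℕ), ((φ ∘ₗ δ) ^ m) x = 0 →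
      S x = ∑ i ∈ Finset.range m, ((-1 : ℤ) ^ i) • (((φ ∘ₗ δ) ^ i) x)) :
    (f ∘ₗ (LinearMap.id - δ ∘ₗ S ∘ₗ φ)) ∘ₗ (S ∘ₗ g) = LinearMap.id :=
  perturbed_fg_eq_id_general R N M 𝒩 ℳ dN dM f g φ hc δ δ_nil S hS
end

section
/- Let R be a ring, let N and M be ℤ-indexed chain complexes of R-modules, let (f, g, φ) be a contraction from N to M, and let δ be a perturbation of N that is pointwise nilpotent with respect to φ. Define Σx = Σ_{i≥0} (−1)^i (φδ)^i x, f_δ = f ∘ (id − δ ∘ Σ ∘ φ), g_δ = Σ ∘ g, and φ_δ = Σ ∘ φ. Then the annihilation side conditions hold for the perturbed data: f_δ ∘ φ_δ = 0, φ_δ ∘ g_δ = 0, and φ_δ ∘ φ_δ = 0. -/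
/-!
Each term `(φδ)^i x` with `i ≥ 1` lies in the image of `φ`, so `S x - x ∈ range φ`.
Hence every map killing `φ` is unchanged by precomposition with `S`; in particular
`φ ∘ S = φ` (as `φ ∘ φ = 0`) and `f ∘ S = f` (as `f ∘ φ = 0`), and the three side conditions
reduce to the unperturbed ones.
-/

section

variable {R N P : Type} [Ring R] [AddCommGroup N] [Module R N] [AddCommGroup P] [Module R P]

theorem sub_mem_range_of_eq_alternating_sum {φ δ S : N →ₗ[R] N}
    (hnil : ∀ x : N, ∃ m : ℕ, ((φ ∘ₗ δ) ^ m) x = 0)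
    (hS : ∀ (x : N) (m : ℕ), ((φ ∘ₗ δ) ^ m) x = 0 →
      S x = ∑ i ∈ Finset.range m, ((-1 : ℤ) ^ i) • (((φ ∘ₗ δ) ^ i) x))
    (x : N) : S x - x ∈ LinearMap.range φ := by
  have hpow (i : ℕ) : ((φ ∘ₗ δ) ^ (i + 1)) x = φ (δ (((φ ∘ₗ δ) ^ i) x)) := by
    rw [pow_succ', Module.End.mul_apply, LinearMap.comp_apply]
  obtain ⟨m, hm⟩ := hnil x
  have hm' : ((φ ∘ₗ δ) ^ (m + 1)) x = 0 := by rw [hpow, hm, map_zero, map_zero]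
  rw [hS x _ hm', Finset.sum_range_succ', pow_zero, one_smul, pow_zero, Module.End.one_apply,
    add_sub_cancel_right]
  exact Submodule.sum_mem _ fun i _ => zsmul_mem (hpow i ▸ LinearMap.mem_range_self φ _) _

theorem comp_eq_self_of_sub_mem_range {φ S : N →ₗ[R] N} {A : N →ₗ[R] P}
    (hA : A ∘ₗ φ = 0) (hS : ∀ x : N, S x - x ∈ LinearMap.range φ) : A ∘ₗ S = A := by
  ext x
  have hker : S x - x ∈ LinearMap.ker A := LinearMap.range_le_ker_iff.mpr hA (hS x)
  rwa [LinearMap.mem_ker, map_sub, sub_eq_zero] at hker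

end

theorem perturbed_side_conditions_general
    (R : Type) [Ring R]
    (N : Type) [AddCommGroup N] [Module R N]
    (M : Type) [AddCommGroup M] [Module R M]
    (𝒩 : ℤ → Submodule R N) (ℳ : ℤ → Submodule R M)
    (dN : N →ₗ[R] N) (dM : M →ₗ[R] M)
    (f : N →ₗ[R] M) (g : M →ₗ[R] N) (φ : N →ₗ[R] N)
    (hc : Contraction R N M 𝒩 ℳ dN dM f g φ)
    (δ : N →ₗ[R] N)
    (δ_nil : ∀ x : N, ∃ m : ℕ, ((φ ∘ₗ δ) ^ m) x = 0)
    (S : N →ₗ[R] N)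
    (hS : ∀ (x : N) (m : ℕ), ((φ ∘ₗ δ) ^ m) x = 0 →
      S x = ∑ i ∈ Finset.range m, ((-1 : ℤ) ^ i) • (((φ ∘ₗ δ) ^ i) x)) :
    ((f ∘ₗ (LinearMap.id - δ ∘ₗ S ∘ₗ φ)) ∘ₗ (S ∘ₗ φ) = 0) ∧
    ((S ∘ₗ φ) ∘ₗ (S ∘ₗ g) = 0) ∧
    ((S ∘ₗ φ) ∘ₗ (S ∘ₗ φ) = 0) := by
  have hSx := sub_mem_range_of_eq_alternating_sum δ_nil hS
  have hφS : ∀ x, φ (S x) = φ x := LinearMap.congr_fun (comp_eq_self_of_sub_mem_range hc.φφ hSx)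
  have hfS : ∀ x, f (S x) = f x := LinearMap.congr_fun (comp_eq_self_of_sub_mem_range hc.fφ hSx)
  have hφφ : ∀ x, φ (φ x) = 0 := LinearMap.congr_fun hc.φφ
  have hfφ : ∀ x, f (φ x) = 0 := LinearMap.congr_fun hc.fφ
  have hφg : ∀ x, φ (g x) = 0 := LinearMap.congr_fun hc.φg
  refine ⟨?_, ?_, ?_⟩ <;> ext x <;> simp [hφS, hfS, hφφ, hfφ, hφg]

/-- The annihilation side conditions hold for the perturbed data:
`f_δ ∘ φ_δ = 0`, `φ_δ ∘ g_δ = 0` and `φ_δ ∘ φ_δ = 0`, where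
`f_δ = f ∘ (id - δ ∘ S ∘ φ)`, `g_δ = S ∘ g` and `φ_δ = S ∘ φ`. -/
theorem perturbed_side_conditions
    (R : Type) [Ring R]
    (N : Type) [AddCommGroup N] [Module R N]
    (M : Type) [AddCommGroup M] [Module R M]
    (𝒩 : ℤ → Submodule R N) (ℳ : ℤ → Submodule R M)
    (dN : N →ₗ[R] N) (dM : M →ₗ[R] M)
    (f : N →ₗ[R] M) (g : M →ₗ[R] N) (φ : N →ₗ[R] N)
    (hc : Contraction R N M 𝒩 ℳ dN dM f g φ)
    (δ : N →ₗ[R] N)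
    (δ_deg : ∀ i : ℤ, ∀ x ∈ 𝒩 i, δ x ∈ 𝒩 (i - 1))
    (δ_pert : (dN + δ) ∘ₗ (dN + δ) = 0)
    (δ_nil : ∀ x : N, ∃ m : ℕ, ((φ ∘ₗ δ) ^ m) x = 0)
    (S : N →ₗ[R] N)
    (hS : ∀ (x : N) (m : ℕ), ((φ ∘ₗ δ) ^ m) x = 0 →
      S x = ∑ i ∈ Finset.range m, ((-1 : ℤ) ^ i) • (((φ ∘ₗ δ) ^ i) x)) :
    ((f ∘ₗ (LinearMap.id - δ ∘ₗ S ∘ₗ φ)) ∘ₗ (S ∘ₗ φ) = 0) ∧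
    ((S ∘ₗ φ) ∘ₗ (S ∘ₗ g) = 0) ∧
    ((S ∘ₗ φ) ∘ₗ (S ∘ₗ φ) = 0) :=
  perturbed_side_conditions_general R N M 𝒩 ℳ dN dM f g φ hc δ δ_nil S hS
end

section
/- Let k be a field and N ≥ 1. Every persistence module M of length N with all M_i finite-dimensional is isomorphic (as a functor to k-vector spaces) to a finite direct sum of interval modules: there exist m ≥ 0 and pairs (b_1, d_1), …, (b_m, d_m) with 0 ≤ b_l ≤ d_l ≤ N−1 such that M ≅ ⊕_{l=1}^m I[b_l, d_l]. -/
/-- A persistence module of length `N` over a field `k`: a functor from the linear order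
`{0, 1, …, N-1}` to the category of `k`-vector spaces. -/
structure PersistenceModule (k : Type) [Field k] (N : ℕ) where
  V : Fin N → Type
  [acg : ∀ i, AddCommGroup (V i)]
  [mod : ∀ i, Module k (V i)]
  map : ∀ i j : Fin N, i ≤ j → (V i →ₗ[k] V j)
  map_id : ∀ i : Fin N, map i i le_rfl = LinearMap.id
  map_comp : ∀ (i j l : Fin N) (hij : i ≤ j) (hjl : j ≤ l),
    map j l hjl ∘ₗ map i j hij = map i l (hij.trans hjl)

attribute [instance] PersistenceModule.acg PersistenceModule.mod

/-- The dimension (1 or 0) of the interval module `I[b,d]` at index `i`. -/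
def intervalDim {N : ℕ} (b d i : Fin N) : ℕ := if b ≤ i ∧ i ≤ d then 1 else 0

/-- The interval module `I[b,d]`: one-dimensional (a copy of `k`) at indices
`b ≤ i ≤ d` and zero elsewhere, with identity structure maps on the interval and zero
structure maps elsewhere. -/
noncomputable def intervalModule (k : Type) [Field k] (N : ℕ) (b d : Fin N) :
    PersistenceModule k N where
  V i := Fin (intervalDim b d i) → k
  map i j hij :=
    if h : b ≤ i ∧ j ≤ d then
      LinearMap.funLeft k k
        (Fin.cast (by
          simp [intervalDim, h.1, h.2, h.1.trans hij, hij.trans h.2]))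
    else 0
  map_id i := by
    try dsimp only
    by_cases h : b ≤ i ∧ i ≤ d
    · rw [dif_pos h]
      refine LinearMap.ext fun x => funext fun t => ?_
      simp [LinearMap.funLeft_apply]
    · rw [dif_neg h]
      refine LinearMap.ext fun x => funext fun t => ?_
      have h0 : intervalDim b d i = 0 := by simp [intervalDim, h]
      exact absurd t.isLt (by omega)
  map_comp i j l hij hjl := by
    try dsimp only
    by_cases h3 : b ≤ i ∧ l ≤ d
    · have h1 : b ≤ i ∧ j ≤ d := ⟨h3.1, hjl.trans h3.2⟩
      have h2 : b ≤ j ∧ l ≤ d := ⟨h3.1.trans hij, h3.2⟩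
      rw [dif_pos h1, dif_pos h2, dif_pos h3]
      refine LinearMap.ext fun x => funext fun t => ?_
      simp [LinearMap.funLeft_apply]
    · rw [dif_neg h3]
      by_cases h1 : b ≤ i ∧ j ≤ d
      · have h2 : ¬(b ≤ j ∧ l ≤ d) := fun h2 => h3 ⟨h1.1, h2.2⟩
        rw [dif_neg h2, LinearMap.zero_comp]
      · rw [dif_neg h1, LinearMap.comp_zero]

/-- The (pointwise) direct sum of a finite family of persistence modules. -/
noncomputable def persDirectSum {k : Type} [Field k] {N : ℕ} (m : ℕ)
    (Ms : Fin m → PersistenceModule k N) : PersistenceModule k N where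
  V i := ∀ l : Fin m, (Ms l).V i
  map i j hij := LinearMap.pi fun l => ((Ms l).map i j hij) ∘ₗ LinearMap.proj l
  map_id i := by
    refine LinearMap.ext fun x => funext fun t => ?_
    simp [PersistenceModule.map_id]
  map_comp i j l hij hjl := by
    refine LinearMap.ext fun x => funext fun t => ?_
    simp only [LinearMap.comp_apply, LinearMap.pi_apply, LinearMap.proj_apply]
    rw [← LinearMap.comp_apply, (Ms t).map_comp]

/-- An isomorphism of persistence modules: a family of linear equivalences commuting
with the structure maps. -/
structure PersistenceModule.Iso {k : Type} [Field k] {N : ℕ}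
    (M₁ M₂ : PersistenceModule k N) where
  equiv : ∀ i : Fin N, M₁.V i ≃ₗ[k] M₂.V i
  comm : ∀ (i j : Fin N) (hij : i ≤ j) (x : M₁.V i),
    equiv j (M₁.map i j hij x) = M₂.map i j hij (equiv i x)

/-!
Induction on the total dimension `∑ i, dim M_i`. Let `d` be the largest index with `M_d ≠ 0`,
`b` the smallest index with `M(b ≤ d) ≠ 0`, and `x ∈ M_b` with `x_d := M(b ≤ d) x ≠ 0`. The
images `x_i` of `x` span a copy of `I[b, d]` inside `M`. Pull a complement `U_d` of `k ∙ x_d`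
back along the structure maps: `U_i := M(i ≤ d)⁻¹ U_d` for `i ≤ d` and `U_i := M_i` for `i > d`.
This family is invariant, and it is complementary to `k ∙ x_i` at every `i` (for `i < b` because
`M(i ≤ d) = 0` by minimality of `b`), so `M ≅ I[b, d] ⊕ U` with `U` of smaller total dimension.
-/

theorem LinearMap.bijective_coprod_subtype_of_isCompl {R V W : Type*} [Ring R] [AddCommGroup V]
    [Module R V] [AddCommGroup W] [Module R W] {f : V →ₗ[R] W} {U : Submodule R W}
    (hf : Function.Injective f) (h : IsCompl (LinearMap.range f) U) :
    Function.Bijective (f.coprod U.subtype) := by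
  refine ⟨?_, ?_⟩
  · rw [← LinearMap.ker_eq_bot, LinearMap.ker_coprod_of_disjoint_range _ _
      (by rw [U.range_subtype]; exact h.disjoint), LinearMap.ker_eq_bot.mpr hf, U.ker_subtype,
      Submodule.prod_bot]
  · rw [← LinearMap.range_eq_top, LinearMap.range_coprod, U.range_subtype, h.sup_eq_top]

theorem Submodule.isCompl_span_singleton_comap {K V W : Type*} [DivisionRing K]
    [AddCommGroup V] [Module K V] [AddCommGroup W] [Module K W] (g : V →ₗ[K] W) {v : V}
    {U : Submodule K W} (hv : g v ≠ 0) (h : IsCompl (K ∙ g v) U) :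
    IsCompl (K ∙ v) (U.comap g) := by
  have hv₀ : v ≠ 0 := fun h₀ => hv (by rw [h₀, map_zero])
  refine ⟨((Submodule.disjoint_span_singleton' hv₀).mpr
    ((Submodule.disjoint_span_singleton' hv).mp h.disjoint.symm)).symm, ?_⟩
  rw [codisjoint_iff, Submodule.eq_top_iff']
  intro y
  obtain ⟨_, hs, u, hu, hsu⟩ := Submodule.mem_sup.mp (h.sup_eq_top ▸ Submodule.mem_top : g y ∈ _)
  obtain ⟨c, rfl⟩ := Submodule.mem_span_singleton.mp hs
  refine Submodule.mem_sup.mpr ⟨c • v, Submodule.smul_mem _ c (Submodule.mem_span_singleton_self v),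
    y - c • v, ?_, add_sub_cancel _ _⟩
  rw [Submodule.mem_comap, map_sub, map_smul, ← hsu, add_sub_cancel_left]
  exact hu

namespace PersistenceModule

variable {k : Type} [Field k] {N : ℕ}

structure Hom (M₁ M₂ : PersistenceModule k N) where
  app : ∀ i, M₁.V i →ₗ[k] M₂.V i
  comm : ∀ (i j : Fin N) (hij : i ≤ j) (x : M₁.V i),
    app j (M₁.map i j hij x) = M₂.map i j hij (app i x)

namespace Iso

variable {M₁ M₂ M₃ : PersistenceModule k N}

def symm (e : M₁.Iso M₂) : M₂.Iso M₁ where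
  equiv i := (e.equiv i).symm
  comm i j hij x := (e.equiv j).injective <| by
    rw [LinearEquiv.apply_symm_apply, e.comm, LinearEquiv.apply_symm_apply]

def trans (e : M₁.Iso M₂) (f : M₂.Iso M₃) : M₁.Iso M₃ where
  equiv i := (e.equiv i).trans (f.equiv i)
  comm i j hij x := by
    change f.equiv j (e.equiv j _) = _
    rw [e.comm, f.comm]
    rfl

noncomputable def ofSubsingleton [∀ i, Subsingleton (M₁.V i)] [∀ i, Subsingleton (M₂.V i)] :
    M₁.Iso M₂ where
  equiv _ := LinearEquiv.ofSubsingleton _ _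
  comm _ _ _ _ := Subsingleton.elim _ _

noncomputable def ofBijective (f : M₁.Hom M₂) (hf : ∀ i, Function.Bijective (f.app i)) :
    M₁.Iso M₂ where
  equiv i := LinearEquiv.ofBijective (f.app i) (hf i)
  comm := f.comm

end Iso

noncomputable def prod (M₁ M₂ : PersistenceModule k N) : PersistenceModule k N where
  V i := M₁.V i × M₂.V i
  map i j hij := (M₁.map i j hij).prodMap (M₂.map i j hij)
  map_id i := by rw [map_id, map_id, LinearMap.prodMap_id]
  map_comp i j l hij hjl := by
    change (_ ∘ₗ _).prodMap (_ ∘ₗ _) = _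
    rw [map_comp, map_comp]

noncomputable def Iso.prodCongrRight {M₁ M₂ M₂' : PersistenceModule k N} (e : M₂.Iso M₂') :
    (M₁.prod M₂).Iso (M₁.prod M₂') where
  equiv i := (LinearEquiv.refl k (M₁.V i)).prodCongr (e.equiv i)
  comm i j hij x := Prod.ext rfl (e.comm i j hij x.2)

noncomputable def prodPersDirectSumIso {m : ℕ} (Ms : Fin (m + 1) → PersistenceModule k N) :
    ((Ms 0).prod (persDirectSum m fun l => Ms l.succ)).Iso (persDirectSum (m + 1) Ms) where
  equiv i := Fin.consLinearEquiv k fun l => (Ms l).V i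
  comm i j hij x := by
    funext l
    refine Fin.cases ?_ (fun l => ?_) l <;> rfl

noncomputable def restrict (M : PersistenceModule k N) (U : ∀ i, Submodule k (M.V i))
    (hU : ∀ (i j : Fin N) (hij : i ≤ j), ∀ x ∈ U i, M.map i j hij x ∈ U j) :
    PersistenceModule k N where
  V i := U i
  map i j hij := (M.map i j hij).restrict (hU i j hij)
  map_id i := by ext; simp [map_id]
  map_comp i j l hij hjl := by ext; simp [← M.map_comp i j l hij hjl]

noncomputable def Iso.prodRestrictOfIsCompl {A M : PersistenceModule k N} (f : A.Hom M)
    (U : ∀ i, Submodule k (M.V i))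
    (hU : ∀ (i j : Fin N) (hij : i ≤ j), ∀ x ∈ U i, M.map i j hij x ∈ U j)
    (hf : ∀ i, Function.Injective (f.app i))
    (hc : ∀ i, IsCompl (LinearMap.range (f.app i)) (U i)) :
    (A.prod (M.restrict U hU)).Iso M :=
  Iso.ofBijective
    { app i := (f.app i).coprod (U i).subtype
      comm i j hij x := by
        change f.app j (A.map i j hij x.1) + M.map i j hij (x.2 : U i).val
          = M.map i j hij (f.app i x.1 + (x.2 : U i).val)
        rw [f.comm, map_add] }
    fun i => LinearMap.bijective_coprod_subtype_of_isCompl (hf i) (hc i)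

instance (b d i : Fin N) : Subsingleton (Fin (intervalDim b d i)) := by
  unfold intervalDim
  split <;> infer_instance

theorem le_and_le_of_fin_intervalDim {b d i : Fin N} (t : Fin (intervalDim b d i)) :
    b ≤ i ∧ i ≤ d := by
  by_contra h
  simp only [intervalDim, if_neg h] at t
  exact t.elim0

theorem intervalModule_map_of_le {b d i j : Fin N} (hij : i ≤ j) (h : b ≤ i ∧ j ≤ d) :
    (intervalModule k N b d).map i j hij = LinearMap.funLeft k k
      (Fin.cast (by simp [intervalDim, h.1, h.2, h.1.trans hij, hij.trans h.2])) := by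
  change dite _ _ _ = _
  exact dif_pos h

theorem intervalModule_map_eq_zero {b d i j : Fin N} (hij : i ≤ j) (h : ¬(b ≤ i ∧ j ≤ d)) :
    (intervalModule k N b d).map i j hij = 0 := by
  change dite _ _ _ = _
  exact dif_neg h

noncomputable def pushAt (M : PersistenceModule k N) {b : Fin N} (x : M.V b) (i : Fin N) :
    M.V i :=
  if h : b ≤ i then M.map b i h x else 0

theorem map_pushAt (M : PersistenceModule k N) {b i j : Fin N} (x : M.V b) (hbi : b ≤ i)
    (hij : i ≤ j) : M.map i j hij (M.pushAt x i) = M.pushAt x j := by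
  rw [pushAt, pushAt, dif_pos hbi, dif_pos (hbi.trans hij), ← LinearMap.comp_apply, map_comp]

noncomputable def intervalHom (M : PersistenceModule k N) {b : Fin N} (d : Fin N) (x : M.V b)
    (hx : ∀ j (hbj : b ≤ j), d < j → M.map b j hbj x = 0) : (intervalModule k N b d).Hom M where
  app i := Fintype.linearCombination k fun _ => M.pushAt x i
  comm i j hij c := by
    change ∑ t, (intervalModule k N b d).map i j hij c t • M.pushAt x j
      = M.map i j hij (∑ t, c t • M.pushAt x i)
    simp only [map_sum, map_smul]
    by_cases h : b ≤ i ∧ j ≤ d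
    · rw [intervalModule_map_of_le hij h, map_pushAt M x h.1 hij]
      exact Fintype.sum_equiv (finCongr <| by
        simp [intervalDim, h.1, h.2, h.1.trans hij, hij.trans h.2]) _ _ fun t => rfl
    · rw [intervalModule_map_eq_zero hij h]
      refine (Finset.sum_eq_zero fun t _ => ?_).trans (Finset.sum_eq_zero fun t _ => ?_).symm
      · exact zero_smul k _
      · have hbi := (le_and_le_of_fin_intervalDim t).1
        rw [map_pushAt M x hbi hij, pushAt, dif_pos (hbi.trans hij),
          hx j _ (lt_of_not_ge fun hjd => h ⟨hbi, hjd⟩), smul_zero]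

structure IsIntervalGenerator (M : PersistenceModule k N) {b : Fin N} (d : Fin N) (x : M.V b) :
    Prop where
  le : b ≤ d
  map_ne_zero : M.map b d le x ≠ 0
  map_eq_zero_of_lt : ∀ j (hbj : b ≤ j), d < j → M.map b j hbj x = 0
  map_eq_zero_of_lt_birth : ∀ i (hid : i ≤ d), i < b → M.map i d hid = 0

namespace IsIntervalGenerator

variable {M : PersistenceModule k N} {b d : Fin N} {x : M.V b}

theorem map_pushAt_eq (h : M.IsIntervalGenerator d x) {i : Fin N} (hbi : b ≤ i) (hid : i ≤ d) :
    M.map i d hid (M.pushAt x i) = M.map b d h.le x := by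
  rw [map_pushAt M x hbi hid, pushAt, dif_pos h.le]

theorem intervalHom_app_injective (h : M.IsIntervalGenerator d x) (i : Fin N) :
    Function.Injective ((M.intervalHom d x h.map_eq_zero_of_lt).app i) := by
  refine linearIndependent_iff_injective_fintypeLinearCombination.mp
    ((linearIndependent_subsingleton_index_iff _).mpr fun t hzero => h.map_ne_zero ?_)
  obtain ⟨hbi, hid⟩ := le_and_le_of_fin_intervalDim t
  rw [← h.map_pushAt_eq hbi hid, hzero, map_zero]

theorem exists_iso_prod (h : M.IsIntervalGenerator d x) :
    ∃ M' : PersistenceModule k N, Nonempty (M.Iso ((intervalModule k N b d).prod M')) := by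
  obtain ⟨Ud, hUd⟩ := Submodule.exists_isCompl (k ∙ M.map b d h.le x)
  let U : ∀ i, Submodule k (M.V i) := fun i => if hid : i ≤ d then Ud.comap (M.map i d hid) else ⊤
  have hU : ∀ (i j : Fin N) (hij : i ≤ j), ∀ y ∈ U i, M.map i j hij y ∈ U j := by
    intro i j hij y hy
    by_cases hjd : j ≤ d
    · simp only [U, dif_pos hjd, dif_pos (hij.trans hjd), Submodule.mem_comap] at hy ⊢
      rwa [← LinearMap.comp_apply, map_comp]
    · simp only [U, dif_neg hjd, Submodule.mem_top]
  have hc : ∀ i,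
      IsCompl (LinearMap.range ((M.intervalHom d x h.map_eq_zero_of_lt).app i)) (U i) := by
    intro i
    change IsCompl (LinearMap.range
      (Fintype.linearCombination k fun _ : Fin (intervalDim b d i) => M.pushAt x i)) (U i)
    rw [Fintype.range_linearCombination]
    by_cases hi : b ≤ i ∧ i ≤ d
    · have : Nonempty (Fin (intervalDim b d i)) := ⟨⟨0, by simp [intervalDim, hi]⟩⟩
      rw [Set.range_const]
      simp only [U, dif_pos hi.2]
      refine Submodule.isCompl_span_singleton_comap _ ?_ ?_ <;> rw [h.map_pushAt_eq hi.1 hi.2]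
      · exact h.map_ne_zero
      · exact hUd
    · have : IsEmpty (Fin (intervalDim b d i)) := by
        rw [intervalDim, if_neg hi]
        infer_instance
      have hUi : U i = ⊤ := by
        by_cases hid : i ≤ d
        · simp only [U, dif_pos hid, h.map_eq_zero_of_lt_birth i hid
            (lt_of_not_ge fun hbi => hi ⟨hbi, hid⟩), Submodule.comap_zero]
        · exact dif_neg hid
      rw [Set.range_eq_empty, Submodule.span_empty, hUi]
      exact isCompl_bot_top
  exact ⟨_, ⟨(Iso.prodRestrictOfIsCompl _ U hU h.intervalHom_app_injective hc).symm⟩⟩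

end IsIntervalGenerator

theorem exists_isIntervalGenerator (M : PersistenceModule k N) {i₀ : Fin N}
    (hi₀ : Nontrivial (M.V i₀)) : ∃ (b d : Fin N) (x : M.V b), M.IsIntervalGenerator d x := by
  classical
  obtain ⟨d, hd, hd_max⟩ := Finset.exists_max_image
    (Finset.univ.filter fun i => Nontrivial (M.V i)) id ⟨i₀, by simpa using hi₀⟩
  have hdd : ∃ hdd : d ≤ d, M.map d d hdd ≠ 0 := by
    have : Nontrivial (M.V d) := (Finset.mem_filter.mp hd).2
    obtain ⟨v, hv⟩ := exists_ne (0 : M.V d)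
    exact ⟨le_rfl, fun h₀ => hv (by simpa [map_id] using LinearMap.congr_fun h₀ v)⟩
  obtain ⟨b, hb, hb_min⟩ := Finset.exists_min_image
    (Finset.univ.filter fun i => ∃ hid : i ≤ d, M.map i d hid ≠ 0) id ⟨d, by simpa using hdd⟩
  obtain ⟨hbd, hne⟩ := (Finset.mem_filter.mp hb).2
  obtain ⟨x, hx⟩ := DFunLike.ne_iff.mp hne
  refine ⟨b, d, x, hbd, hx, fun j hbj hdj => ?_, fun i hid hib => ?_⟩
  · have : Subsingleton (M.V j) := not_nontrivial_iff_subsingleton.mp fun hj =>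
      hdj.not_ge (hd_max j (by simpa using hj))
    exact Subsingleton.elim _ _
  · by_contra hne
    exact hib.not_ge (hb_min i (by simpa using ⟨hid, hne⟩))

def IsIntervalDecomposable (M : PersistenceModule k N) : Prop :=
  ∃ (m : ℕ) (b d : Fin m → Fin N), (∀ l, b l ≤ d l) ∧
    Nonempty (M.Iso (persDirectSum m fun l => intervalModule k N (b l) (d l)))

theorem isIntervalDecomposable_of_subsingleton (M : PersistenceModule k N)
    [∀ i, Subsingleton (M.V i)] : M.IsIntervalDecomposable :=
  have (i : Fin N) :
      Subsingleton ((persDirectSum 0 fun l => intervalModule k N l.elim0 l.elim0).V i) :=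
    inferInstanceAs (Subsingleton (∀ _ : Fin 0, _))
  ⟨0, Fin.elim0, Fin.elim0, fun l => l.elim0, ⟨Iso.ofSubsingleton⟩⟩

theorem IsIntervalDecomposable.of_iso {M M' : PersistenceModule k N} (e : M.Iso M')
    (h : M'.IsIntervalDecomposable) : M.IsIntervalDecomposable :=
  let ⟨m, b, d, hbd, ⟨e'⟩⟩ := h
  ⟨m, b, d, hbd, ⟨e.trans e'⟩⟩

theorem IsIntervalDecomposable.intervalModule_prod {M : PersistenceModule k N} {b d : Fin N}
    (hbd : b ≤ d) (h : M.IsIntervalDecomposable) :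
    ((intervalModule k N b d).prod M).IsIntervalDecomposable :=
  let ⟨m, b', d', hbd', ⟨e⟩⟩ := h
  ⟨m + 1, Fin.cons b b', Fin.cons d d', Fin.cases hbd hbd',
    ⟨e.prodCongrRight.trans
      (prodPersDirectSumIso fun l => intervalModule k N
        ((Fin.cons b b' : Fin (m + 1) → Fin N) l) ((Fin.cons d d' : Fin (m + 1) → Fin N) l))⟩⟩

theorem isIntervalDecomposable (M : PersistenceModule k N)
    (hfd : ∀ i, FiniteDimensional k (M.V i)) : M.IsIntervalDecomposable := by
  induction hn : ∑ i, Module.finrank k (M.V i) using Nat.strong_induction_on generalizing M with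
  | _ n ih =>
  by_cases hM : ∃ i, Nontrivial (M.V i)
  · obtain ⟨i₀, hi₀⟩ := hM
    obtain ⟨b, d, x, hx⟩ := exists_isIntervalGenerator M hi₀
    obtain ⟨M', ⟨e⟩⟩ := hx.exists_iso_prod
    have hfd' : ∀ i, FiniteDimensional k (M'.V i) := fun i =>
      Module.Finite.of_surjective
        (LinearMap.snd k ((intervalModule k N b d).V i) (M'.V i) ∘ₗ (e.equiv i).toLinearMap)
        (Prod.snd_surjective.comp (e.equiv i).surjective)
    have hdim : ∀ i, Module.finrank k (M.V i) = intervalDim b d i + Module.finrank k (M'.V i) := by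
      intro i
      have : Module.Finite k ((intervalModule k N b d).V i) :=
        inferInstanceAs (Module.Finite k (Fin _ → k))
      rw [(e.equiv i).finrank_eq]
      exact (Module.finrank_prod ..).trans (congrArg (· + _) (Module.finrank_fin_fun k))
    have hlt : ∑ i, Module.finrank k (M'.V i) < n := hn ▸ Finset.sum_lt_sum
      (fun i _ => (hdim i).symm ▸ Nat.le_add_left _ _)
      ⟨b, Finset.mem_univ b, by rw [hdim, intervalDim, if_pos ⟨le_rfl, hx.le⟩]; omega⟩
    exact (IsIntervalDecomposable.intervalModule_prod hx.le (ih _ hlt M' hfd' rfl)).of_iso e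
  · have (i : Fin N) : Subsingleton (M.V i) :=
      not_nontrivial_iff_subsingleton.mp fun hi => hM ⟨i, hi⟩
    exact isIntervalDecomposable_of_subsingleton M

end PersistenceModule

theorem persistenceModule_interval_decomposition_general
    (k : Type) [Field k] (N : ℕ)
    (M : PersistenceModule k N)
    (hfd : ∀ i : Fin N, FiniteDimensional k (M.V i)) :
    ∃ (m : ℕ) (b d : Fin m → Fin N),
      (∀ l : Fin m, b l ≤ d l) ∧
      Nonempty (M.Iso (persDirectSum m fun l => intervalModule k N (b l) (d l))) :=
  M.isIntervalDecomposable hfd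

/-- **Interval decomposition.** Every pointwise finite-dimensional persistence module of
length `N` over a field `k` is isomorphic to a finite direct sum of interval modules
`I[b_l, d_l]`. -/
theorem persistenceModule_interval_decomposition
    (k : Type) [Field k] (N : ℕ) (hN : 1 ≤ N)
    (M : PersistenceModule k N)
    (hfd : ∀ i : Fin N, FiniteDimensional k (M.V i)) :
    ∃ (m : ℕ) (b d : Fin m → Fin N),
      (∀ l : Fin m, b l ≤ d l) ∧
      Nonempty (M.Iso (persDirectSum m fun l => intervalModule k N (b l) (d l))) :=
  persistenceModule_interval_decomposition_general k N M hfd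
end

section
/- Let k be a field, N ≥ 1, and let M be a persistence module of length N isomorphic to the finite direct sum ⊕_{l=1}^m I[b_l, d_l] of interval modules. Then for all 0 ≤ i ≤ j ≤ N−1, the dimension of the persistent homology group PH^{i,j}(M) = image(M(i ≤ j)) equals the number of indices l ∈ {1, …, m} with b_l ≤ i and j ≤ d_l, i.e. the number of intervals of the barcode containing [i, j]. -/
-- auxiliary lemmas
lemma range_equiv_of_iso {k : Type} [Field k] {N : ℕ}
    {M₁ M₂ : PersistenceModule k N} (e : M₁.Iso M₂) (i j : Fin N) (hij : i ≤ j) :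
    Module.finrank k ↥(LinearMap.range (M₁.map i j hij))
      = Module.finrank k ↥(LinearMap.range (M₂.map i j hij)) := by
  have h : LinearMap.range (M₂.map i j hij)
      = Submodule.map (e.equiv j : M₁.V j →ₗ[k] M₂.V j) (LinearMap.range (M₁.map i j hij)) := by
    ext y
    simp only [LinearMap.mem_range, Submodule.mem_map]
    constructor
    · rintro ⟨x, rfl⟩
      exact ⟨M₁.map i j hij ((e.equiv i).symm x), ⟨_, rfl⟩, by
        simpa using e.comm i j hij ((e.equiv i).symm x)⟩
    · rintro ⟨z, ⟨x, rfl⟩, rfl⟩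
      exact ⟨e.equiv i x, (e.comm i j hij x).symm⟩
  rw [h]
  exact LinearEquiv.finrank_eq ((e.equiv j).submoduleMap _)

noncomputable def rangePiEquiv {k : Type} [Field k] {A B : Fin m → Type}
    [∀ l, AddCommGroup (A l)] [∀ l, Module k (A l)]
    [∀ l, AddCommGroup (B l)] [∀ l, Module k (B l)]
    (f : ∀ l, A l →ₗ[k] B l) :
    ↥(LinearMap.range (LinearMap.pi fun l => (f l) ∘ₗ LinearMap.proj l :
        (∀ l, A l) →ₗ[k] (∀ l, B l))) ≃ₗ[k] ∀ l, ↥(LinearMap.range (f l)) := by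
  refine LinearEquiv.ofBijective
    (LinearMap.pi fun l => (LinearMap.proj l).restrict ?_) ⟨?_, ?_⟩
  · rintro x ⟨y, rfl⟩
    exact ⟨y l, rfl⟩
  · intro x y hxy
    ext l
    exact congrArg Subtype.val (congrFun hxy l)
  · intro y
    choose a ha using fun l => (y l).2
    refine ⟨⟨fun l => f l (a l), ⟨a, rfl⟩⟩, ?_⟩
    ext l
    simpa using ha l


/-- If `M` is a persistence module of length `N` isomorphic to the direct sum of the
interval modules `I[b_l, d_l]`, `l = 1, …, m`, then for all `i ≤ j` the dimension of
the persistent homology group `PH^{i,j}(M) = image(M(i ≤ j))` equals the number of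
intervals of the barcode containing `[i, j]`, i.e. the number of `l` with
`b_l ≤ i` and `j ≤ d_l`. -/
theorem persistent_homology_dim_eq_card_intervals
    (k : Type) [Field k] (N : ℕ) (hN : 1 ≤ N)
    (M : PersistenceModule k N)
    (m : ℕ) (b d : Fin m → Fin N) (hbd : ∀ l, b l ≤ d l)
    (hiso : Nonempty (M.Iso (persDirectSum m fun l => intervalModule k N (b l) (d l))))
    (i j : Fin N) (hij : i ≤ j) :
    Module.finrank k ↥(LinearMap.range (M.map i j hij))
      = (Finset.univ.filter fun l : Fin m => b l ≤ i ∧ j ≤ d l).card := by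
  obtain ⟨e⟩ := hiso
  rw [range_equiv_of_iso e i j hij]
  rw [show (persDirectSum m fun l => intervalModule k N (b l) (d l)).map i j hij
      = LinearMap.pi fun l => ((intervalModule k N (b l) (d l)).map i j hij)
          ∘ₗ LinearMap.proj l from rfl]
  haveI hfin : ∀ l, Module.Finite k
      ↥(LinearMap.range ((intervalModule k N (b l) (d l)).map i j hij)) := by
    intro l
    haveI : Module.Finite k ((intervalModule k N (b l) (d l)).V j) := by
      show Module.Finite k (Fin (intervalDim (b l) (d l) j) → k)
      infer_instance
    infer_instance
  refine (LinearEquiv.finrank_eq (rangePiEquiv (fun l => (intervalModule k N (b l) (d l)).map i j hij))).trans ?_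
  rw [Module.finrank_pi_fintype,
    Finset.card_filter]
  refine Finset.sum_congr rfl fun l _ => ?_
  show Module.finrank k ↥(LinearMap.range ((intervalModule k N (b l) (d l)).map i j hij)) = _
  by_cases h : b l ≤ i ∧ j ≤ d l
  · rw [if_pos h]
    have hmap : (intervalModule k N (b l) (d l)).map i j hij
        = LinearMap.funLeft k k (Fin.cast (by
            simp [intervalDim, h.1, h.2, h.1.trans hij, hij.trans h.2])) := by
      exact dif_pos h
    rw [hmap]
    have hsurj : Function.Surjective (LinearMap.funLeft k k (Fin.cast (by
            simp [intervalDim, h.1, h.2, h.1.trans hij, hij.trans h.2] :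
              intervalDim (b l) (d l) j = intervalDim (b l) (d l) i))) :=
      LinearMap.funLeft_surjective_of_injective k k _ (Fin.cast_injective _)
    refine (congrArg (fun S : Submodule k _ => Module.finrank k S) (LinearMap.range_eq_top.mpr hsurj)).trans ((finrank_top k _).trans ?_)
    show Module.finrank k (Fin (intervalDim (b l) (d l) j) → k) = 1
    rw [Module.finrank_fin_fun]
    simp [intervalDim, h.1.trans hij, h.2]
  · rw [if_neg h]
    have hmap : (intervalModule k N (b l) (d l)).map i j hij = 0 := by
      exact dif_neg h
    rw [hmap, LinearMap.range_zero, finrank_bot]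
end
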